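/- Fix points x₁,…,x_m and let H₁,…,H_r be classes of real-valued functions each uniformly bounded by A > 0 on x₁,…,x_m. Then the empirical Rademacher complexity of their union satisfies R̂_m(H₁ ∪ ⋯ ∪ H_r) ≤ max_{1≤i≤r} R̂_m(H_i) + 2√2 · A · √(log r)/√m. -/

import Mathlib

/-- A Rademacher sign from a boolean. -/
def sgn (b : Bool) : ℝ := if b then 1 else -1

/-- Expectation over `ε` uniform on `{-1,+1}^m` (encoded as `Fin m → Bool`). -/
noncomputable def EB (m : ℕ) (f : (Fin m → Bool) → ℝ) : ℝ := (∑ ε, f ε) / 2 ^ m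

/-- Empirical Rademacher complexity of a class `H` on data `x₁,…,x_m`. -/
noncomputable def rademacher {α : Type*} (m : ℕ) (x : Fin m → α) (H : Set (α → ℝ)) : ℝ :=
  EB m (fun ε => sSup ((fun h => (1 / (m:ℝ)) * ∑ i, sgn (ε i) * h (x i)) '' H))

/-- Empirical Rademacher complexity with absolute value inside the supremum. -/
noncomputable def radAbs {α : Type*} (m : ℕ) (x : Fin m → α) (H : Set (α → ℝ)) : ℝ :=
  EB m (fun ε => sSup ((fun h => (1 / (m:ℝ)) * |∑ i, sgn (ε i) * h (x i)|) '' H))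

/-!
For each sign vector `ε`, the supremum over the union is the largest of the class suprema
`Z i ε`, so the excess of the union over `max_i E Z_i` is at most `E max_i (Z_i - E Z_i)`.
Flipping one sign moves every `Z_i` by at most `2A/m`, so McDiarmid's inequality (proved by
induction on the number of signs from Hoeffding's two-point lemma) gives
`E exp (t (Z_i - E Z_i)) ≤ exp (t² A² / (2m))`. Jensen's inequality and a union bound over the
`r` classes give `t E max_i (Z_i - E Z_i) ≤ log r + t² A² / (2m)` for every `t > 0`, and the
optimal `t` yields `√2 A √(log r) / √m`.
-/

open Finset Function Real

section CubeExpectation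

variable {n : ℕ}

lemma EB_eq_sum_mul (f : (Fin n → Bool) → ℝ) : EB n f = ∑ ε, ((2 : ℝ) ^ n)⁻¹ * f ε := by
  rw [EB, ← mul_sum, inv_mul_eq_div]

lemma EB_mono {f g : (Fin n → Bool) → ℝ} (h : ∀ ε, f ε ≤ g ε) : EB n f ≤ EB n g := by
  unfold EB
  gcongr with ε
  exact h ε

lemma EB_const (c : ℝ) : EB n (fun _ => c) = c := by
  simp [EB]

lemma EB_add (f g : (Fin n → Bool) → ℝ) :
    EB n (fun ε => f ε + g ε) = EB n f + EB n g := by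
  rw [EB, sum_add_distrib, add_div, ← EB, ← EB]

lemma EB_sub_const (f : (Fin n → Bool) → ℝ) (c : ℝ) :
    EB n (fun ε => f ε - c) = EB n f - c := by
  simp only [sub_eq_add_neg, EB_add f, EB_const]

lemma EB_mul_left (c : ℝ) (f : (Fin n → Bool) → ℝ) :
    EB n (fun ε => c * f ε) = c * EB n f := by
  rw [EB, ← mul_sum, mul_div_assoc, ← EB]

lemma EB_sum {ι : Type*} [Fintype ι] (f : ι → (Fin n → Bool) → ℝ) :
    EB n (fun ε => ∑ i, f i ε) = ∑ i, EB n (f i) := by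
  rw [EB, sum_comm, sum_div]
  rfl

lemma exp_EB_le (f : (Fin n → Bool) → ℝ) : exp (EB n f) ≤ EB n (fun ε => exp (f ε)) := by
  rw [EB_eq_sum_mul, EB_eq_sum_mul]
  refine convexOn_exp.map_sum_le (fun _ _ => by positivity) ?_ (fun _ _ => Set.mem_univ _)
  simp

lemma EB_succ (f : (Fin (n + 1) → Bool) → ℝ) :
    EB (n + 1) f = EB n (fun ε => (f (Fin.cons true ε) + f (Fin.cons false ε)) / 2) := by
  rw [EB, EB, ← (Fin.consEquiv fun _ => Bool).sum_comp, Fintype.sum_prod_type,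
    Fintype.sum_bool, ← sum_add_distrib, ← sum_div, pow_succ, div_div, mul_comm]
  rfl

end CubeExpectation

def HasBoundedDifferences {n : ℕ} (c : ℝ) (f : (Fin n → Bool) → ℝ) : Prop :=
  ∀ ε j b, |f ε - f (update ε j b)| ≤ c

namespace HasBoundedDifferences

variable {n : ℕ} {c : ℝ} {f : (Fin n → Bool) → ℝ}

lemma of_le_update (h : ∀ ε j b, f ε ≤ f (update ε j b) + c) :
    HasBoundedDifferences c f := by
  intro ε j b
  have h' := h (update ε j b) j (ε j)
  rw [update_idem, update_eq_self] at h'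
  rw [abs_sub_le_iff]
  constructor <;> linarith [h ε j b]

lemma const_mul_sub (hf : HasBoundedDifferences c f) {t : ℝ} (ht : 0 ≤ t) (μ : ℝ) :
    HasBoundedDifferences (t * c) (fun ε => t * (f ε - μ)) := by
  intro ε j b
  rw [← mul_sub, sub_sub_sub_cancel_right, abs_mul, abs_of_nonneg ht]
  exact mul_le_mul_of_nonneg_left (hf ε j b) ht

lemma abs_sub_cons_le {f : (Fin (n + 1) → Bool) → ℝ} (hf : HasBoundedDifferences c f)
    (ε : Fin n → Bool) : |f (Fin.cons true ε) - f (Fin.cons false ε)| ≤ c := by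
  simpa only [Fin.update_cons_zero] using hf (Fin.cons true ε) 0 false

lemma average_cons {f : (Fin (n + 1) → Bool) → ℝ} (hf : HasBoundedDifferences c f) :
    HasBoundedDifferences c (fun ε => (f (Fin.cons true ε) + f (Fin.cons false ε)) / 2) := by
  intro ε j b
  have htrue := hf (Fin.cons true ε) j.succ b
  have hfalse := hf (Fin.cons false ε) j.succ b
  rw [← Fin.cons_update] at htrue hfalse
  rw [← sub_div, add_sub_add_comm, abs_div, abs_two, div_le_iff₀ two_pos]
  linarith [abs_add_le (f (Fin.cons true ε) - f (Fin.cons true (update ε j b)))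
    (f (Fin.cons false ε) - f (Fin.cons false (update ε j b)))]

end HasBoundedDifferences

/-- Hoeffding's lemma for the uniform law on two points. -/
lemma exp_add_exp_div_two_le {a b c : ℝ} (h : |a - b| ≤ c) :
    (exp a + exp b) / 2 ≤ exp ((a + b) / 2 + c ^ 2 / 8) := by
  have hcosh : (exp a + exp b) / 2 = exp ((a + b) / 2) * cosh ((a - b) / 2) := by
    rw [cosh_eq, mul_div, mul_add, ← Real.exp_add, ← Real.exp_add]
    ring_nf
  have hsq : ((a - b) / 2) ^ 2 / 2 ≤ c ^ 2 / 8 := by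
    nlinarith [sq_abs (a - b), abs_nonneg (a - b)]
  rw [hcosh, Real.exp_add]
  gcongr
  exact (cosh_le_exp_half_sq _).trans (exp_le_exp.mpr hsq)

/-- McDiarmid's exponential moment bound, by induction on the number of signs. -/
lemma HasBoundedDifferences.EB_exp_le {c : ℝ} :
    ∀ {n : ℕ} {f : (Fin n → Bool) → ℝ}, HasBoundedDifferences c f →
      EB n (fun ε => exp (f ε)) ≤ exp (EB n f + n * c ^ 2 / 8)
  | 0, f, _ => by simp [EB]
  | n + 1, f, hf => by
    set g : (Fin n → Bool) → ℝ := fun ε => (f (Fin.cons true ε) + f (Fin.cons false ε)) / 2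
    have hg : EB (n + 1) f = EB n g := EB_succ f
    calc EB (n + 1) (fun ε => exp (f ε))
        ≤ EB n (fun ε => exp (g ε + c ^ 2 / 8)) := by
          rw [EB_succ]
          exact EB_mono fun ε => exp_add_exp_div_two_le (hf.abs_sub_cons_le ε)
      _ = exp (c ^ 2 / 8) * EB n (fun ε => exp (g ε)) := by
          simp only [Real.exp_add, mul_comm _ (exp (c ^ 2 / 8)), EB_mul_left]
      _ ≤ exp (c ^ 2 / 8) * exp (EB n g + n * c ^ 2 / 8) := by
          gcongr
          exact hf.average_cons.EB_exp_le
      _ = exp (EB (n + 1) f + (n + 1 : ℕ) * c ^ 2 / 8) := by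
          rw [hg, ← Real.exp_add]
          push_cast
          ring_nf

lemma HasBoundedDifferences.EB_exp_mul_sub_EB_le {n : ℕ} {c t : ℝ}
    {f : (Fin n → Bool) → ℝ} (hf : HasBoundedDifferences c f) (ht : 0 ≤ t) :
    EB n (fun ε => exp (t * (f ε - EB n f))) ≤ exp (t ^ 2 * (n * c ^ 2 / 8)) := by
  have hcentered : EB n (fun ε => t * (f ε - EB n f)) = 0 := by
    rw [EB_mul_left, EB_sub_const, sub_self, mul_zero]
  calc EB n (fun ε => exp (t * (f ε - EB n f)))
      ≤ exp (EB n (fun ε => t * (f ε - EB n f)) + n * (t * c) ^ 2 / 8) :=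
        (hf.const_mul_sub ht _).EB_exp_le
    _ = exp (t ^ 2 * (n * c ^ 2 / 8)) := by
        rw [hcentered]
        ring_nf

lemma le_two_mul_sqrt_mul_of_forall_pos {T a b : ℝ} (hb : 0 ≤ b)
    (h : ∀ t > 0, t * T ≤ a + t ^ 2 * b) : T ≤ 2 * √(a * b) := by
  by_contra! hT
  have hTpos : 0 < T := lt_of_le_of_lt (by positivity) hT
  rcases hb.eq_or_lt with rfl | hb
  · have h' := h ((|a| + 1) / T) (by positivity)
    rw [div_mul_cancel₀ _ hTpos.ne'] at h'
    linarith [le_abs_self a]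
  · have h' := h (T / (2 * b)) (by positivity)
    have hsq : T ^ 2 ≤ 4 * (a * b) := by
      field_simp at h'
      nlinarith
    have hab : 0 ≤ a * b := by nlinarith
    nlinarith [sq_sqrt hab, sqrt_nonneg (a * b)]

section MaximalInequality

variable {n : ℕ} {ι : Type*} [Fintype ι] [Nonempty ι] {c : ℝ} {Z : ι → (Fin n → Bool) → ℝ}

lemma exp_mul_iSup_le_sum (t : ℝ) (g : ι → ℝ) :
    exp (t * ⨆ i, g i) ≤ ∑ i, exp (t * g i) := by
  obtain ⟨i, hi⟩ := exists_eq_ciSup_of_finite (f := g)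
  rw [← hi]
  exact single_le_sum (f := fun i => exp (t * g i)) (fun _ _ => (exp_pos _).le) (mem_univ i)

lemma mul_EB_iSup_sub_EB_le (hZ : ∀ i, HasBoundedDifferences c (Z i)) {t : ℝ} (ht : 0 ≤ t) :
    t * EB n (fun ε => ⨆ i, (Z i ε - EB n (Z i))) ≤
      log (Fintype.card ι) + t ^ 2 * (n * c ^ 2 / 8) := by
  have hexp : exp (t * EB n (fun ε => ⨆ i, (Z i ε - EB n (Z i)))) ≤
      Fintype.card ι * exp (t ^ 2 * (n * c ^ 2 / 8)) :=
    calc exp (t * EB n (fun ε => ⨆ i, (Z i ε - EB n (Z i))))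
        ≤ EB n (fun ε => exp (t * ⨆ i, (Z i ε - EB n (Z i)))) := by
          rw [← EB_mul_left]
          exact exp_EB_le _
      _ ≤ EB n (fun ε => ∑ i, exp (t * (Z i ε - EB n (Z i)))) :=
          EB_mono fun ε => exp_mul_iSup_le_sum t _
      _ ≤ ∑ _i : ι, exp (t ^ 2 * (n * c ^ 2 / 8)) := by
          rw [EB_sum]
          exact sum_le_sum fun i _ => (hZ i).EB_exp_mul_sub_EB_le ht
      _ = Fintype.card ι * exp (t ^ 2 * (n * c ^ 2 / 8)) := by
          rw [sum_const, card_univ, nsmul_eq_mul]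
  have hcard : (0 : ℝ) < Fintype.card ι := by exact_mod_cast Fintype.card_pos
  have hlog := log_le_log (exp_pos _) hexp
  rwa [log_exp, log_mul hcard.ne' (exp_pos _).ne', log_exp] at hlog

lemma EB_iSup_sub_EB_le (hZ : ∀ i, HasBoundedDifferences c (Z i)) (hc : 0 ≤ c) :
    EB n (fun ε => ⨆ i, (Z i ε - EB n (Z i))) ≤ c * √(n * log (Fintype.card ι) / 2) := by
  calc _ ≤ 2 * √(log (Fintype.card ι) * (n * c ^ 2 / 8)) :=
        le_two_mul_sqrt_mul_of_forall_pos (by positivity)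
          fun t ht => mul_EB_iSup_sub_EB_le hZ ht.le
    _ = c * √(n * log (Fintype.card ι) / 2) := by
        rw [show log (Fintype.card ι) * (n * c ^ 2 / 8)
            = (c / 2) ^ 2 * (n * log (Fintype.card ι) / 2) by ring,
          sqrt_mul (sq_nonneg _), sqrt_sq (by positivity)]
        ring

lemma EB_iSup_le_iSup_EB_add :
    EB n (fun ε => ⨆ i, Z i ε) ≤
      (⨆ i, EB n (Z i)) + EB n (fun ε => ⨆ i, (Z i ε - EB n (Z i))) := by
  rw [add_comm, ← EB_const (n := n) (⨆ i, EB n (Z i)), ← EB_add]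
  refine EB_mono fun ε => ciSup_le fun i => ?_
  have h₁ := le_ciSup (Set.finite_range fun i => Z i ε - EB n (Z i)).bddAbove i
  have h₂ := le_ciSup (Set.finite_range fun i => EB n (Z i)).bddAbove i
  linarith

end MaximalInequality

section Rademacher

variable {α : Type*} {m : ℕ} {x : Fin m → α} {H : Set (α → ℝ)} {A : ℝ}

/-- The integrand of `radAbs`: `radAbs m x H = EB m (radAbsSup m x H)` holds by `rfl`. -/
noncomputable def radAbsSup (m : ℕ) (x : Fin m → α) (H : Set (α → ℝ)) (ε : Fin m → Bool) :
    ℝ :=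
  sSup ((fun h => (1 / (m:ℝ)) * |∑ i, sgn (ε i) * h (x i)|) '' H)

lemma abs_sgn (b : Bool) : |sgn b| = 1 := by
  cases b <;> simp [sgn]

lemma abs_sum_sgn_mul_le (ε : Fin m → Bool) (y : Fin m → ℝ) :
    |∑ i, sgn (ε i) * y i| ≤ ∑ i, |y i| :=
  (abs_sum_le_sum_abs _ _).trans_eq (by simp only [abs_mul, abs_sgn, one_mul])

lemma abs_sum_sgn_mul_le_update (ε : Fin m → Bool) (j : Fin m) (b : Bool) {y : Fin m → ℝ}
    (hy : |y j| ≤ A) :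
    |∑ i, sgn (ε i) * y i| ≤ |∑ i, sgn (update ε j b i) * y i| + 2 * A := by
  have hdiff : ∑ i, sgn (ε i) * y i - ∑ i, sgn (update ε j b i) * y i
      = (sgn (ε j) - sgn b) * y j := by
    rw [← sum_sub_distrib, sum_eq_single j (fun i _ hi => by rw [update_of_ne hi, sub_self])
      (fun hj => absurd (mem_univ j) hj), update_self, sub_mul]
  have hsgn : |sgn (ε j) - sgn b| ≤ 2 := by
    linarith [abs_sub (sgn (ε j)) (sgn b), abs_sgn (ε j), abs_sgn b]
  calc |∑ i, sgn (ε i) * y i|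
      ≤ |∑ i, sgn (update ε j b i) * y i| + |(sgn (ε j) - sgn b) * y j| := by
        rw [← hdiff]
        linarith [abs_sub_abs_le_abs_sub (∑ i, sgn (ε i) * y i)
          (∑ i, sgn (update ε j b i) * y i)]
    _ ≤ |∑ i, sgn (update ε j b i) * y i| + 2 * A := by
        rw [abs_mul]
        gcongr

lemma bddAbove_image_abs_sum_sgn (hH : ∀ h ∈ H, ∀ j, |h (x j)| ≤ A) (ε : Fin m → Bool) :
    BddAbove ((fun h => (1 / (m:ℝ)) * |∑ i, sgn (ε i) * h (x i)|) '' H) := by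
  refine ⟨1 / m * ∑ _i : Fin m, A, ?_⟩
  rintro _ ⟨h, hh, rfl⟩
  dsimp only
  gcongr
  exact (abs_sum_sgn_mul_le ε _).trans (sum_le_sum fun i _ => hH h hh i)

lemma radAbsSup_nonneg (ε : Fin m → Bool) : 0 ≤ radAbsSup m x H ε :=
  Real.sSup_nonneg (by rintro _ ⟨h, _, rfl⟩; positivity)

lemma radAbsSup_le_update (hA : 0 ≤ A) (hH : ∀ h ∈ H, ∀ j, |h (x j)| ≤ A)
    (ε : Fin m → Bool) (j : Fin m) (b : Bool) :
    radAbsSup m x H ε ≤ radAbsSup m x H (update ε j b) + 2 * A / m := by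
  refine Real.sSup_le ?_ (add_nonneg (radAbsSup_nonneg _) (by positivity))
  rintro _ ⟨h, hh, rfl⟩
  calc 1 / (m:ℝ) * |∑ i, sgn (ε i) * h (x i)|
      ≤ 1 / (m:ℝ) * (|∑ i, sgn (update ε j b i) * h (x i)| + 2 * A) := by
        gcongr
        exact abs_sum_sgn_mul_le_update ε j b (hH h hh j)
    _ = 1 / (m:ℝ) * |∑ i, sgn (update ε j b i) * h (x i)| + 2 * A / m := by ring
    _ ≤ radAbsSup m x H (update ε j b) + 2 * A / m := by
        gcongr
        exact le_csSup (bddAbove_image_abs_sum_sgn hH _) ⟨h, hh, rfl⟩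

lemma hasBoundedDifferences_radAbsSup (hA : 0 ≤ A) (hH : ∀ h ∈ H, ∀ j, |h (x j)| ≤ A) :
    HasBoundedDifferences (2 * A / m) (radAbsSup m x H) :=
  .of_le_update (radAbsSup_le_update hA hH)

lemma radAbsSup_iUnion_le {ι : Type*} [Finite ι] {H : ι → Set (α → ℝ)}
    (hH : ∀ i, ∀ h ∈ H i, ∀ j, |h (x j)| ≤ A) (ε : Fin m → Bool) :
    radAbsSup m x (⋃ i, H i) ε ≤ ⨆ i, radAbsSup m x (H i) ε := by
  refine Real.sSup_le ?_ (Real.iSup_nonneg fun i => radAbsSup_nonneg ε)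
  rintro _ ⟨h, hh, rfl⟩
  obtain ⟨i, hi⟩ := Set.mem_iUnion.mp hh
  exact (le_csSup (bddAbove_image_abs_sum_sgn (hH i) ε) ⟨h, hi, rfl⟩).trans
    (le_ciSup (f := fun i => radAbsSup m x (H i) ε) (Set.finite_range _).bddAbove i)

end Rademacher

lemma two_mul_div_mul_sqrt_mul_div_two {A L m : ℝ} (hm : 0 < m) :
    2 * A / m * √(m * L / 2) = √2 * A * √L / √m := by
  have : 0 < √m := sqrt_pos.mpr hm
  rw [sqrt_div' _ zero_le_two, sqrt_mul hm.le]
  field_simp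
  rw [sq_sqrt hm.le, sq_sqrt zero_le_two]
  ring

/-- Rademacher complexity of a union of uniformly bounded classes. -/
theorem rad_union {α : Type*} (m r : ℕ) (hm : 0 < m) (hr : 0 < r) (x : Fin m → α)
    (H : Fin r → Set (α → ℝ)) (A : ℝ) (hA : 0 < A)
    (hbdd : ∀ i, ∀ h ∈ H i, ∀ j, |h (x j)| ≤ A) :
    radAbs m x (⋃ i, H i) ≤
      (⨆ i, radAbs m x (H i)) +
        2 * Real.sqrt 2 * A * Real.sqrt (Real.log r) / Real.sqrt m := by
  have : Nonempty (Fin r) := ⟨⟨0, hr⟩⟩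
  have hbd i := hasBoundedDifferences_radAbsSup hA.le (hbdd i)
  calc radAbs m x (⋃ i, H i)
      ≤ EB m (fun ε => ⨆ i, radAbsSup m x (H i) ε) := EB_mono (radAbsSup_iUnion_le hbdd)
    _ ≤ (⨆ i, radAbs m x (H i)) +
          EB m (fun ε => ⨆ i, (radAbsSup m x (H i) ε - radAbs m x (H i))) :=
        EB_iSup_le_iSup_EB_add
    _ ≤ (⨆ i, radAbs m x (H i)) + 2 * A / m * √(m * log (Fintype.card (Fin r)) / 2) := by
        gcongr
        exact EB_iSup_sub_EB_le hbd (by positivity)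
    _ = (⨆ i, radAbs m x (H i)) + √2 * A * √(log r) / √m := by
        rw [Fintype.card_fin, two_mul_div_mul_sqrt_mul_div_two (Nat.cast_pos.mpr hm)]
    _ ≤ _ := by
        gcongr
        exact le_mul_of_one_le_left (sqrt_nonneg 2) one_le_two
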